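/- arXiv:2112.09181 — 2 statements merged into one kernel-verified Lean document; each statement's English description precedes it below -/
import Mathlib

section
/- Let f ∈ C²([0,1]^d) with ‖f‖_{C²} := max(‖f‖_∞, max_{|α|=2} ‖∂^α f‖_∞). Then for every n ≥ 1, ‖f - B_n(f)‖_∞ ≤ d²‖f‖_{C²}/(4n), where B_n(f)(x) = ∑_{0 ≤ k ≤ n} f(k/n) ∏_{j=1}^d p_{n,k_j}(x_j). -/
open Finset

/-- The Bernstein polynomial `p_{n,k}(x) = C(n,k) x^k (1-x)^{n-k}`. -/
noncomputable def bern (n k : ℕ) (x : ℝ) : ℝ :=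
  (n.choose k : ℝ) * x ^ k * (1 - x) ^ (n - k)

/-- The multivariate Bernstein polynomial of a function `f : [0,1]^d → ℝ`. -/
noncomputable def bernOp (d n : ℕ) (f : (Fin d → ℝ) → ℝ) (x : Fin d → ℝ) : ℝ :=
  ∑ k : Fin d → Fin (n + 1),
    f (fun j => ((k j : ℕ) : ℝ) / n) * ∏ j, bern n (k j) (x j)

/-- The second partial derivative `∂_i ∂_j f` evaluated at `x`. -/
noncomputable def secondPartial (d : ℕ) (f : (Fin d → ℝ) → ℝ) (i j : Fin d)
    (x : Fin d → ℝ) : ℝ :=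
  iteratedFDeriv ℝ 2 f x ![Pi.single i 1, Pi.single j 1]

/-!
The weights `∏ⱼ p_{n,kⱼ}(xⱼ)` of `B_n f(x)` form a product of binomial distributions, so they
are nonnegative, sum to one, have barycenter `x`, and the node `k/n` has coordinate variances
`xⱼ(1 - xⱼ)/n ≤ 1/(4n)`. Since the weights reproduce affine functions, `f x - B_n f(x)` is
minus the weighted mean of the first-order Taylor remainders of `f` at `x`. Applying the mean
value inequality twice along the segment from `x` to `y` bounds the remainder at `y` by
`M (∑ⱼ |yⱼ - xⱼ|)² ≤ M d ∑ⱼ (yⱼ - xⱼ)²`, and averaging gives `M d · d/(4n)`.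
-/

open Set

lemma bernsteinPolynomial_eval (n k : ℕ) (x : ℝ) :
    (bernsteinPolynomial ℝ n k).eval x = bern n k x := by
  simp [bernsteinPolynomial, bern, mul_comm]

lemma bern_nonneg {n k : ℕ} {x : ℝ} (hx : x ∈ Icc (0 : ℝ) 1) : 0 ≤ bern n k x := by
  have h0 : 0 ≤ x := hx.1
  have h1 : 0 ≤ 1 - x := sub_nonneg.2 hx.2
  unfold bern
  positivity

lemma sum_bern (n : ℕ) (x : ℝ) : ∑ k : Fin (n + 1), bern n k x = 1 := by
  simpa [Fin.sum_univ_eq_sum_range (fun k => bern n k x), Polynomial.eval_finsetSum,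
    bernsteinPolynomial_eval] using congr_arg (Polynomial.eval x) (bernsteinPolynomial.sum ℝ n)

lemma sum_natCast_mul_bern (n : ℕ) (x : ℝ) :
    ∑ k : Fin (n + 1), (k : ℝ) * bern n k x = n * x := by
  simpa [Fin.sum_univ_eq_sum_range (fun k => (k : ℝ) * bern n k x), Polynomial.eval_finsetSum,
    bernsteinPolynomial_eval] using
    congr_arg (Polynomial.eval x) (bernsteinPolynomial.sum_smul ℝ n)

lemma sum_sq_mul_bern (n : ℕ) (x : ℝ) :
    ∑ k : Fin (n + 1), (n * x - k) ^ 2 * bern n k x = n * x * (1 - x) := by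
  simpa [Fin.sum_univ_eq_sum_range (fun k => (n * x - k) ^ 2 * bern n k x),
    Polynomial.eval_finsetSum, bernsteinPolynomial_eval] using
    congr_arg (Polynomial.eval x) (bernsteinPolynomial.variance ℝ n)

lemma sum_div_mul_bern {n : ℕ} (x : ℝ) (hn : n ≠ 0) :
    ∑ k : Fin (n + 1), (k / n : ℝ) * bern n k x = x := by
  simp_rw [div_mul_eq_mul_div, ← Finset.sum_div, sum_natCast_mul_bern]
  field_simp

lemma sum_div_sub_sq_mul_bern {n : ℕ} (x : ℝ) (hn : n ≠ 0) :
    ∑ k : Fin (n + 1), (k / n - x : ℝ) ^ 2 * bern n k x = x * (1 - x) / n := by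
  have hn' : (n : ℝ) ≠ 0 := Nat.cast_ne_zero.2 hn
  have h : ∀ k : Fin (n + 1), (k / n - x : ℝ) ^ 2 = (n * x - k) ^ 2 / n ^ 2 := fun k => by
    field_simp; ring
  simp_rw [h, div_mul_eq_mul_div, ← Finset.sum_div, sum_sq_mul_bern]
  field_simp

/-- The `i`-th marginal of a product of weight families that each sum to one. -/
lemma sum_pi_mul_prod_eq_of_sum_eq_one {ι κ R : Type*} [Fintype ι] [DecidableEq ι] [Fintype κ]
    [CommSemiring R] {p : ι → κ → R} (hp : ∀ j, ∑ t, p j t = 1) (c : κ → R) (i : ι) :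
    ∑ k : ι → κ, c (k i) * ∏ j, p j (k j) = ∑ t, c t * p i t := by
  set q : ι → κ → R := fun j t => (if j = i then c t else 1) * p j t
  have hq : ∀ k : ι → κ, c (k i) * ∏ j, p j (k j) = ∏ j, q j (k j) := fun k => by
    simp only [q, Finset.prod_mul_distrib, Finset.prod_ite_eq', Finset.mem_univ, if_true]
  have hq_sum : ∀ j, ∑ t, q j t = if j = i then ∑ t, c t * p i t else 1 := fun j => by
    split_ifs with h
    · subst h; simp [q]
    · simp [q, h, hp]
  simp_rw [hq, ← Fintype.prod_sum, hq_sum, Finset.prod_ite_eq', Finset.mem_univ, if_true]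

noncomputable def bernWeight {ι : Type*} [Fintype ι] (n : ℕ) (x : ι → ℝ)
    (k : ι → Fin (n + 1)) : ℝ :=
  ∏ j, bern n (k j) (x j)

noncomputable def bernNode {ι : Type*} (n : ℕ) (k : ι → Fin (n + 1)) : ι → ℝ :=
  fun j => (k j : ℝ) / n

lemma bernOp_eq_sum_bernWeight (d n : ℕ) (f : (Fin d → ℝ) → ℝ) (x : Fin d → ℝ) :
    bernOp d n f x = ∑ k, f (bernNode n k) * bernWeight n x k :=
  rfl

section BernWeight

variable {ι : Type*} [Fintype ι] {n : ℕ} {x : ι → ℝ}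

lemma bernWeight_nonneg (hx : ∀ j, x j ∈ Icc (0 : ℝ) 1) (k : ι → Fin (n + 1)) :
    0 ≤ bernWeight n x k :=
  Finset.prod_nonneg fun j _ => bern_nonneg (hx j)

variable [DecidableEq ι]

lemma sum_bernWeight : ∑ k, bernWeight n x k = 1 := by
  calc ∑ k, bernWeight n x k = ∏ j, ∑ t : Fin (n + 1), bern n t (x j) :=
      (Fintype.prod_sum fun j (t : Fin (n + 1)) => bern n t (x j)).symm
    _ = 1 := Finset.prod_eq_one fun j _ => sum_bern n (x j)

lemma sum_mul_bernWeight (c : Fin (n + 1) → ℝ) (i : ι) :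
    ∑ k, c (k i) * bernWeight n x k = ∑ t, c t * bern n t (x i) :=
  sum_pi_mul_prod_eq_of_sum_eq_one (fun j => sum_bern n (x j)) c i

lemma sum_bernWeight_smul_bernNode (hn : n ≠ 0) :
    ∑ k, bernWeight n x k • bernNode n k = x := by
  ext i
  simp only [Finset.sum_apply, Pi.smul_apply, smul_eq_mul, bernNode, mul_comm (bernWeight n x _)]
  rw [sum_mul_bernWeight (fun t => (t / n : ℝ)), sum_div_mul_bern _ hn]

lemma sum_bernWeight_mul_sum_sq (hn : n ≠ 0) :
    ∑ k, bernWeight n x k * ∑ i, (bernNode n k i - x i) ^ 2 = ∑ i, x i * (1 - x i) / n := by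
  simp only [Finset.mul_sum]
  rw [Finset.sum_comm]
  refine Finset.sum_congr rfl fun i _ => ?_
  simp only [mul_comm (bernWeight n x _), bernNode]
  rw [sum_mul_bernWeight (fun t => (t / n - x i : ℝ) ^ 2), sum_div_sub_sq_mul_bern _ hn]

end BernWeight

lemma abs_sub_sum_mul_le {κ E : Type*} [Fintype κ] [AddCommGroup E] [Module ℝ E]
    (f : E → ℝ) (L : E →ₗ[ℝ] ℝ) {w : κ → ℝ} {y : κ → E} {x : E} (hw0 : ∀ k, 0 ≤ w k)
    (hw1 : ∑ k, w k = 1) (hx : ∑ k, w k • y k = x) :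
    |f x - ∑ k, f (y k) * w k| ≤ ∑ k, w k * |f (y k) - f x - L (y k - x)| := by
  have hL : ∑ k, w k * L (y k - x) = 0 := by
    simp_rw [← smul_eq_mul, ← map_smul, ← map_sum, smul_sub, Finset.sum_sub_distrib,
      ← Finset.sum_smul, hw1, one_smul, hx, sub_self, map_zero]
  have h : f x - ∑ k, f (y k) * w k = -∑ k, w k * (f (y k) - f x - L (y k - x)) := by
    simp_rw [mul_sub]
    rw [Finset.sum_sub_distrib, Finset.sum_sub_distrib, ← Finset.sum_mul, hw1, hL]
    linear_combination Finset.sum_congr rfl fun k _ => mul_comm (w k) (f (y k))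
  rw [h, abs_neg]
  refine (Finset.abs_sum_le_sum_abs _ _).trans_eq (Finset.sum_congr rfl fun k _ => ?_)
  rw [abs_mul, abs_of_nonneg (hw0 k)]

section Taylor

variable {E F : Type*} [NormedAddCommGroup E] [NormedSpace ℝ E] [NormedAddCommGroup F]
  [NormedSpace ℝ F]

lemma norm_sub_sub_deriv_le {g g' g'' : ℝ → F} {C : ℝ}
    (hg : ∀ t ∈ Icc (0 : ℝ) 1, HasDerivAt g (g' t) t)
    (hg' : ∀ t ∈ Icc (0 : ℝ) 1, HasDerivAt g' (g'' t) t)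
    (hC : ∀ t ∈ Icc (0 : ℝ) 1, ‖g'' t‖ ≤ C) :
    ‖g 1 - g 0 - g' 0‖ ≤ C := by
  have h0 : (0 : ℝ) ∈ Icc (0 : ℝ) 1 := ⟨le_rfl, zero_le_one⟩
  have h1 : (1 : ℝ) ∈ Icc (0 : ℝ) 1 := ⟨zero_le_one, le_rfl⟩
  have hC0 : 0 ≤ C := (norm_nonneg _).trans (hC 0 h0)
  have hg'_sub : ∀ t ∈ Icc (0 : ℝ) 1, ‖g' t - g' 0‖ ≤ C := fun t ht => by
    have := (convex_Icc (0 : ℝ) 1).norm_image_sub_le_of_norm_hasDerivWithin_le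
      (fun u hu => (hg' u hu).hasDerivWithinAt) hC h0 ht
    rw [sub_zero, Real.norm_of_nonneg ht.1] at this
    exact this.trans (mul_le_of_le_one_right hC0 ht.2)
  have h := (convex_Icc (0 : ℝ) 1).norm_image_sub_le_of_norm_hasDerivWithin_le
    (f := fun t => g t - t • g' 0)
    (fun u hu => ((hg u hu).sub ((hasDerivAt_id u).smul_const (g' 0))).hasDerivWithinAt)
    (by simpa using hg'_sub) h0 h1
  simpa [sub_right_comm] using h

lemma norm_sub_sub_fderiv_le {f : E → F} (hf : ContDiff ℝ 2 f) {s : Set E} (hs : Convex ℝ s)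
    {x y : E} (hx : x ∈ s) (hy : y ∈ s) {C : ℝ}
    (hC : ∀ z ∈ s, ‖fderiv ℝ (fderiv ℝ f) z (y - x) (y - x)‖ ≤ C) :
    ‖f y - f x - fderiv ℝ f x (y - x)‖ ≤ C := by
  set v := y - x
  have hline : ∀ t : ℝ, HasDerivAt (fun t : ℝ => x + t • v) v t := fun t => by
    simpa using ((hasDerivAt_id t).smul_const v).const_add x
  have hDf : ContDiff ℝ 1 (fderiv ℝ f) := hf.fderiv_right le_rfl
  have hg : ∀ t : ℝ, HasDerivAt (fun t => f (x + t • v)) (fderiv ℝ f (x + t • v) v) t :=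
    fun t => ((hf.differentiable two_ne_zero _).hasFDerivAt).comp_hasDerivAt t (hline t)
  have hg' : ∀ t : ℝ, HasDerivAt (fun t => fderiv ℝ f (x + t • v) v)
      (fderiv ℝ (fderiv ℝ f) (x + t • v) v v) t := fun t =>
    (((hDf.differentiable one_ne_zero _).hasFDerivAt).comp_hasDerivAt t (hline t)).clm_apply
      (hasDerivAt_const t v) |>.congr_deriv (by simp)
  have h := norm_sub_sub_deriv_le (fun t _ => hg t) (fun t _ => hg' t)
    (fun t ht => hC _ (hs.add_smul_sub_mem hx hy ht))
  simpa [v] using h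

end Taylor

lemma abs_apply_apply_le {ι : Type*} [Fintype ι] [DecidableEq ι]
    (B : (ι → ℝ) →L[ℝ] (ι → ℝ) →L[ℝ] ℝ) {M : ℝ}
    (hB : ∀ i j, |B (Pi.single i 1) (Pi.single j 1)| ≤ M) (v : ι → ℝ) :
    |B v v| ≤ M * (∑ i, |v i|) ^ 2 := by
  have hexp : B v v = ∑ i, ∑ j, v i * v j * B (Pi.single i 1) (Pi.single j 1) := by
    conv_lhs => rw [pi_eq_sum_univ' v]
    simp only [map_sum, map_smul, _root_.sum_apply, _root_.smul_apply,
      smul_eq_mul, Finset.mul_sum]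
    rw [Finset.sum_comm]
    exact Finset.sum_congr rfl fun i _ => Finset.sum_congr rfl fun j _ => by ring
  calc |B v v| ≤ ∑ i, ∑ j, M * (|v i| * |v j|) := by
        rw [hexp]
        refine (Finset.abs_sum_le_sum_abs _ _).trans (Finset.sum_le_sum fun i _ => ?_)
        refine (Finset.abs_sum_le_sum_abs _ _).trans (Finset.sum_le_sum fun j _ => ?_)
        rw [abs_mul, abs_mul, mul_comm M]
        gcongr
        exact hB i j
    _ = M * (∑ i, |v i|) ^ 2 := by
        rw [sq, Finset.sum_mul_sum, Finset.mul_sum]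
        simp_rw [Finset.mul_sum]

lemma abs_sub_sub_fderiv_le_of_abs_secondPartial_le {d : ℕ} {f : (Fin d → ℝ) → ℝ}
    (hf : ContDiff ℝ 2 f) {M : ℝ} (hM : 0 ≤ M)
    (hM2 : ∀ z : Fin d → ℝ, (∀ j, z j ∈ Icc (0 : ℝ) 1) →
      ∀ i j : Fin d, |secondPartial d f i j z| ≤ M)
    {x y : Fin d → ℝ} (hx : ∀ j, x j ∈ Icc (0 : ℝ) 1) (hy : ∀ j, y j ∈ Icc (0 : ℝ) 1) :
    |f y - f x - fderiv ℝ f x (y - x)| ≤ M * d * ∑ i, (y i - x i) ^ 2 := by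
  have hcube : Convex ℝ (univ.pi fun _ : Fin d => Icc (0 : ℝ) 1) :=
    convex_pi fun _ _ => convex_Icc 0 1
  calc |f y - f x - fderiv ℝ f x (y - x)| ≤ M * (∑ i, |y i - x i|) ^ 2 :=
        norm_sub_sub_fderiv_le hf hcube (mem_univ_pi.2 hx) (mem_univ_pi.2 hy) fun z hz =>
          abs_apply_apply_le _ (fun i j => by
            simpa [secondPartial, iteratedFDeriv_two_apply] using hM2 z (mem_univ_pi.1 hz) i j) _
    _ ≤ M * (d * ∑ i, (y i - x i) ^ 2) := by
        gcongr
        simpa [sq_abs] using sq_sum_le_card_mul_sum_sq (s := Finset.univ)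
          (f := fun i => |y i - x i|)
    _ = M * d * ∑ i, (y i - x i) ^ 2 := by ring

lemma bernNode_mem_Icc {ι : Type*} {n : ℕ} (k : ι → Fin (n + 1)) (j : ι) :
    bernNode n k j ∈ Icc (0 : ℝ) 1 :=
  ⟨by unfold bernNode; positivity,
    div_le_one_of_le₀ (by exact_mod_cast (k j).is_le) (Nat.cast_nonneg n)⟩

theorem bernstein_C2_approx_general (d n : ℕ) (hn : 1 ≤ n)
    (f : (Fin d → ℝ) → ℝ) (hf : ContDiff ℝ 2 f) (M : ℝ)
    (hM0 : ∀ x : Fin d → ℝ, (∀ j, x j ∈ Set.Icc (0 : ℝ) 1) → |f x| ≤ M)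
    (hM2 : ∀ x : Fin d → ℝ, (∀ j, x j ∈ Set.Icc (0 : ℝ) 1) →
      ∀ i j : Fin d, |secondPartial d f i j x| ≤ M)
    (x : Fin d → ℝ) (hx : ∀ j, x j ∈ Set.Icc (0 : ℝ) 1) :
    |f x - bernOp d n f x| ≤ (d : ℝ) ^ 2 * M / (4 * n) := by
  have hn0 : n ≠ 0 := Nat.one_le_iff_ne_zero.1 hn
  have hM : 0 ≤ M := (abs_nonneg _).trans (hM0 x hx)
  set y := bernNode (ι := Fin d) n
  rw [bernOp_eq_sum_bernWeight]
  calc |f x - ∑ k, f (y k) * bernWeight n x k|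
      ≤ ∑ k, bernWeight n x k * |f (y k) - f x - fderiv ℝ f x (y k - x)| :=
        abs_sub_sum_mul_le f (fderiv ℝ f x : (Fin d → ℝ) →ₗ[ℝ] ℝ) (bernWeight_nonneg hx)
          sum_bernWeight (sum_bernWeight_smul_bernNode hn0)
    _ ≤ ∑ k, bernWeight n x k * (M * d * ∑ i, (y k i - x i) ^ 2) := by
        gcongr with k
        · exact bernWeight_nonneg hx k
        · exact abs_sub_sub_fderiv_le_of_abs_secondPartial_le hf hM hM2 hx (bernNode_mem_Icc k)
    _ = M * d * ∑ i, x i * (1 - x i) / n := by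
        rw [← sum_bernWeight_mul_sum_sq hn0, Finset.mul_sum]
        exact Finset.sum_congr rfl fun k _ => by ring
    _ ≤ M * d * ∑ _i : Fin d, (1 / (4 * n) : ℝ) := by
        gcongr M * d * ?_
        refine Finset.sum_le_sum fun i _ => ?_
        calc x i * (1 - x i) / n ≤ 1 / 4 / n := by gcongr; nlinarith [sq_nonneg (x i - 1 / 2)]
          _ = 1 / (4 * n) := div_div _ _ _
    _ = (d : ℝ) ^ 2 * M / (4 * n) := by
        simp only [Finset.sum_const, Finset.card_univ, Fintype.card_fin, nsmul_eq_mul]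
        ring

theorem bernstein_C2_approx (d n : ℕ) (hd : 1 ≤ d) (hn : 1 ≤ n)
    (f : (Fin d → ℝ) → ℝ) (hf : ContDiff ℝ 2 f) (M : ℝ)
    (hM0 : ∀ x : Fin d → ℝ, (∀ j, x j ∈ Set.Icc (0 : ℝ) 1) → |f x| ≤ M)
    (hM2 : ∀ x : Fin d → ℝ, (∀ j, x j ∈ Set.Icc (0 : ℝ) 1) →
      ∀ i j : Fin d, |secondPartial d f i j x| ≤ M)
    (x : Fin d → ℝ) (hx : ∀ j, x j ∈ Set.Icc (0 : ℝ) 1) :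
    |f x - bernOp d n f x| ≤ (d : ℝ) ^ 2 * M / (4 * n) :=
  bernstein_C2_approx_general d n hn f hf M hM0 hM2 x hx
end

section
/- For every x ∈ [0,1] and every m ≥ 1, |x(1-x) − ∑_{k=1}^m φ^{∘k}(x)/4^k| ≤ 4^{−m}, where φ is the tent map. Consequently, for any ε ∈ (0,1), taking m ≥ log₂(1/ε)/2 yields a piecewise-linear function approximating x ↦ x(1-x) on [0,1] to within ε. -/
/-- The tent map `φ(x) = 2x` on `[0,1/2]` and `φ(x) = 2-2x` on `[1/2,1]`. -/
noncomputable def tent (x : ℝ) : ℝ := min (2 * x) (2 - 2 * x)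

lemma tent_mem {x : ℝ} (hx : x ∈ Set.Icc (0 : ℝ) 1) : tent x ∈ Set.Icc (0 : ℝ) 1 := by
  obtain ⟨h0, h1⟩ := hx
  unfold tent
  rcases le_total x (1/2) with h | h
  · rw [min_eq_left (by linarith)]
    constructor <;> linarith
  · rw [min_eq_right (by linarith)]
    constructor <;> linarith

lemma tent_iter_mem {x : ℝ} (hx : x ∈ Set.Icc (0 : ℝ) 1) (k : ℕ) :
    tent^[k] x ∈ Set.Icc (0 : ℝ) 1 := by
  induction k with
  | zero => simpa using hx
  | succ n ih => rw [Function.iterate_succ_apply']; exact tent_mem ih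

lemma tent_key {x : ℝ} (hx : x ∈ Set.Icc (0 : ℝ) 1) :
    x * (1 - x) = tent x / 4 + tent x * (1 - tent x) / 4 := by
  obtain ⟨h0, h1⟩ := hx
  unfold tent
  rcases le_total x (1/2) with h | h
  · rw [min_eq_left (by linarith)]; ring
  · rw [min_eq_right (by linarith)]; ring

lemma takagi_identity (x : ℝ) (hx : x ∈ Set.Icc (0 : ℝ) 1) (m : ℕ) :
    x * (1 - x) - ∑ k ∈ Finset.range m, tent^[k + 1] x / 4 ^ (k + 1)
      = tent^[m] x * (1 - tent^[m] x) / 4 ^ m := by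
  induction m with
  | zero => simp
  | succ n ih =>
      have key := tent_key (tent_iter_mem hx n)
      have h4 : (4:ℝ) ^ n ≠ 0 := by positivity
      rw [Finset.sum_range_succ, Function.iterate_succ_apply', ← sub_sub, ih, pow_succ]
      linear_combination key / 4 ^ n

theorem takagi_partial_sum_error (x : ℝ) (hx : x ∈ Set.Icc (0 : ℝ) 1) (m : ℕ)
    (hm : 1 ≤ m) :
    |x * (1 - x) - ∑ k ∈ Finset.range m, tent^[k + 1] x / 4 ^ (k + 1)| ≤ 1 / 4 ^ m ∧
    ∀ ε ∈ Set.Ioo (0 : ℝ) 1, Real.logb 2 (1 / ε) / 2 ≤ m →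
      |x * (1 - x) - ∑ k ∈ Finset.range m, tent^[k + 1] x / 4 ^ (k + 1)| ≤ ε := by
  have hid := takagi_identity x hx m
  obtain ⟨h0, h1⟩ := tent_iter_mem hx m
  have h4 : (0:ℝ) < 4 ^ m := by positivity
  have hbound : |x * (1 - x) - ∑ k ∈ Finset.range m, tent^[k + 1] x / 4 ^ (k + 1)| ≤ 1 / 4 ^ m := by
    rw [hid, abs_div, abs_of_pos h4, div_le_div_iff₀ h4 h4]
    have : |tent^[m] x * (1 - tent^[m] x)| ≤ 1 := by
      rw [abs_le]
      constructor <;> nlinarith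
    nlinarith
  refine ⟨hbound, fun ε hε hlog => ?_⟩
  obtain ⟨hε0, hε1⟩ := hε
  have h1ε : (0:ℝ) < 1 / ε := by positivity
  have : (1:ℝ) / ε ≤ 2 ^ ((2 * m : ℕ) : ℝ) := by
    have := (Real.logb_le_iff_le_rpow (by norm_num : (1:ℝ) < 2) h1ε).mp
      (by push_cast; linarith : Real.logb 2 (1 / ε) ≤ ((2 * m : ℕ) : ℝ))
    exact this
  rw [Real.rpow_natCast] at this
  have h2m : (2:ℝ) ^ (2 * m) = 4 ^ m := by
    rw [pow_mul]; norm_num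
  rw [h2m] at this
  have : 1 / 4 ^ m ≤ ε := by
    rw [div_le_iff₀ h4]
    calc (1:ℝ) = ε * (1/ε) := by field_simp
    _ ≤ ε * 4 ^ m := by nlinarith
  linarith
end
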